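/- arXiv:2110.08477 — 3 statements merged into one kernel-verified Lean document; each statement's English description precedes it below -/
import Mathlib

section
/- Let Φ : ℝ^d → ℝ be differentiable with L-Lipschitz gradient, let λ, ω, ω₀ ∈ ℝ^d with μ > L > 0, and define L^Φ(ω) = Φ(ω) + ⟨λ, ω − ω₀⟩ + (μ/2)‖ω − ω₀‖². If ‖∇Φ(ω) + λ + μ(ω − ω₀)‖ ≤ δ, then for any ω': L^Φ(ω) − L^Φ(ω') ≤ δ²/(2L) − ((μ − 2L)/2)‖ω − ω'‖². -/
open scoped RealInnerProductSpace

set_option maxHeartbeats 1000000 in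
lemma descent_aux {d : ℕ} (Φ : EuclideanSpace ℝ (Fin d) → ℝ)
    (G : EuclideanSpace ℝ (Fin d) → EuclideanSpace ℝ (Fin d))
    (hgrad : ∀ x, HasGradientAt Φ (G x) x)
    (L : ℝ) (hL : 0 < L)
    (hLip : ∀ x y, ‖G x - G y‖ ≤ L * ‖x - y‖)
    (x y : EuclideanSpace ℝ (Fin d)) :
    Φ x - Φ y ≤ ⟪G x, x - y⟫ + L / 2 * ‖x - y‖ ^ 2 := by
  set v := y - x with hv
  have hGcont : Continuous G := by
    rw [Metric.continuous_iff]
    intro b ε hε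
    exact ⟨ε / L, by positivity, fun a ha => by
      calc dist (G a) (G b) = ‖G a - G b‖ := by rw [dist_eq_norm]
      _ ≤ L * ‖a - b‖ := hLip a b
      _ < L * (ε / L) := by
          apply mul_lt_mul_of_pos_left _ hL
          rwa [← dist_eq_norm]
      _ = ε := by field_simp⟩
  have hline : ∀ t : ℝ, HasDerivAt (fun t : ℝ => Φ (x + t • v)) ⟪G (x + t • v), v⟫ t := by
    intro t
    have h1 : HasDerivAt (fun t : ℝ => x + t • v) v t := by
      simpa using ((hasDerivAt_id t).smul_const v).const_add x
    have := ((hgrad (x + t • v)).hasFDerivAt).comp_hasDerivAt t h1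
    simp at this; exact this
  have hcont : Continuous fun t : ℝ => ⟪G (x + t • v), v⟫ := by
    exact (hGcont.comp (by continuity)).inner continuous_const
  have hint : Φ y - Φ x = ∫ t in (0:ℝ)..1, ⟪G (x + t • v), v⟫ := by
    have heq := intervalIntegral.integral_eq_sub_of_hasDerivAt (fun t _ => hline t)
      (hcont.intervalIntegrable 0 1)
    have hxy : x + v = y := by rw [hv]; abel
    rw [heq, one_smul, zero_smul, add_zero, hxy]
  have hbound : ∀ t ∈ Set.Icc (0:ℝ) 1,
      ⟪G x, v⟫ - ⟪G (x + t • v), v⟫ ≤ L * t * ‖v‖ ^ 2 := by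
    intro t ht
    have : ⟪G x, v⟫ - ⟪G (x + t • v), v⟫ = ⟪G x - G (x + t • v), v⟫ := by
      rw [inner_sub_left]
    rw [this]
    calc ⟪G x - G (x + t • v), v⟫ ≤ ‖G x - G (x + t • v)‖ * ‖v‖ := real_inner_le_norm _ _
    _ ≤ L * ‖x - (x + t • v)‖ * ‖v‖ := by
        apply mul_le_mul_of_nonneg_right (hLip _ _) (norm_nonneg _)
    _ = L * t * ‖v‖ ^ 2 := by
        have : ‖x - (x + t • v)‖ = t * ‖v‖ := by
          simp [norm_smul, abs_of_nonneg ht.1]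
        rw [this]; ring
  have key : Φ x - Φ y - ⟪G x, x - y⟫ ≤ L / 2 * ‖v‖ ^ 2 := by
    have h1 : Φ x - Φ y - ⟪G x, x - y⟫
        = ∫ t in (0:ℝ)..1, (⟪G x, v⟫ - ⟪G (x + t • v), v⟫) := by
      rw [intervalIntegral.integral_sub (intervalIntegrable_const)
        (hcont.intervalIntegrable 0 1), ← hint]
      have : ⟪G x, x - y⟫ = - ⟪G x, v⟫ := by
        rw [hv, ← inner_neg_right]; congr 1; abel
      simp [this]; ring
    rw [h1]
    calc (∫ t in (0:ℝ)..1, (⟪G x, v⟫ - ⟪G (x + t • v), v⟫))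
        ≤ ∫ t in (0:ℝ)..1, L * t * ‖v‖ ^ 2 := by
          apply intervalIntegral.integral_mono_on zero_le_one
            ((continuous_const.sub hcont).intervalIntegrable 0 1)
            (by apply Continuous.intervalIntegrable; continuity)
          exact hbound
    _ = L / 2 * ‖v‖ ^ 2 := by
        rw [intervalIntegral.integral_mul_const, intervalIntegral.integral_const_mul,
          integral_id]
        ring
  have hnv : ‖v‖ = ‖x - y‖ := by rw [hv, norm_sub_rev]
  rw [hnv] at key
  linarith

/-- One-step descent bound on the augmented Lagrangian when the gradient of the
augmented Lagrangian at the new iterate is δ-small. -/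
theorem stmt_5 {d : ℕ} (Φ : EuclideanSpace ℝ (Fin d) → ℝ)
    (G : EuclideanSpace ℝ (Fin d) → EuclideanSpace ℝ (Fin d))
    (hgrad : ∀ x, HasGradientAt Φ (G x) x)
    (L μ : ℝ) (hL : 0 < L) (hμ : L < μ)
    (hLip : ∀ x y, ‖G x - G y‖ ≤ L * ‖x - y‖)
    (lam ω ω₀ : EuclideanSpace ℝ (Fin d)) (δ : ℝ)
    (LΦ : EuclideanSpace ℝ (Fin d) → ℝ)
    (hLΦ : ∀ w, LΦ w = Φ w + ⟪lam, w - ω₀⟫ + (μ / 2) * ‖w - ω₀‖ ^ 2)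
    (hδ : ‖G ω + lam + μ • (ω - ω₀)‖ ≤ δ) :
    ∀ ω', LΦ ω - LΦ ω' ≤ δ ^ 2 / (2 * L) - ((μ - 2 * L) / 2) * ‖ω - ω'‖ ^ 2 := by
  intro ω'
  have hdesc := descent_aux Φ G hgrad L hL hLip ω ω'
  set g := G ω + lam + μ • (ω - ω₀) with hg
  set u := ω - ω' with hu
  have hnorm : ‖ω' - ω₀‖ ^ 2 = ‖ω - ω₀‖ ^ 2 - 2 * ⟪ω - ω₀, u⟫ + ‖u‖ ^ 2 := by
    have : ω' - ω₀ = (ω - ω₀) - u := by rw [hu]; abel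
    rw [this, norm_sub_sq_real]
  have hinner : ⟪lam, ω - ω₀⟫ - ⟪lam, ω' - ω₀⟫ = ⟪lam, u⟫ := by
    rw [← inner_sub_right]; congr 1; rw [hu]; abel
  have hsplit : ⟪g, u⟫ = ⟪G ω, u⟫ + ⟪lam, u⟫ + μ * ⟪ω - ω₀, u⟫ := by
    rw [hg, inner_add_left, inner_add_left, real_inner_smul_left]
  have hamgm : ⟪g, u⟫ ≤ δ ^ 2 / (2 * L) + L / 2 * ‖u‖ ^ 2 := by
    calc ⟪g, u⟫ ≤ ‖g‖ * ‖u‖ := real_inner_le_norm _ _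
    _ ≤ ‖g‖ ^ 2 / (2 * L) + L / 2 * ‖u‖ ^ 2 := by
        have hkey : ‖g‖ ^ 2 / (2 * L) + L / 2 * ‖u‖ ^ 2 - ‖g‖ * ‖u‖
            = (‖g‖ - L * ‖u‖) ^ 2 / (2 * L) := by
          field_simp
          ring
        have hpos : 0 ≤ (‖g‖ - L * ‖u‖) ^ 2 / (2 * L) := by positivity
        linarith
    _ ≤ δ ^ 2 / (2 * L) + L / 2 * ‖u‖ ^ 2 := by
        have hδ0 : 0 ≤ δ := le_trans (norm_nonneg _) hδ
        have : ‖g‖ ^ 2 ≤ δ ^ 2 := by nlinarith [norm_nonneg g]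
        have h2L : 0 < 2 * L := by linarith
        gcongr
  -- combine
  rw [hLΦ ω, hLΦ ω']
  have hΦ : Φ ω - Φ ω' ≤ ⟪G ω, u⟫ + L / 2 * ‖u‖ ^ 2 := by rw [hu]; exact hdesc
  nlinarith [hamgm, hsplit, hnorm, hinner, sq_nonneg ‖u‖]
end

section
/- Let μ₂ > 0 and suppose for each i ∈ {1,…,N}, μ₂(ψ_i^t − ψ₀^{t-1}) = g_i(ω_i^t, ψ_i^t) − g_i(ω_i^{t-1}, ψ_i^{t-1}) where each g_i is L₂₁-Lipschitz in ω and L₂₂-Lipschitz in ψ. Then μ₂² ∑_{i≠j} ‖ψ_i^t − ψ_j^t‖² ≤ 8N(L₂₂² + L₂₁²) ∑_i (‖ψ_i^t − ψ_i^{t-1}‖² + ‖ω_i^t − ω_i^{t-1}‖²) in the sense that μ₂²/(2N) ∑_{i≠j}‖ψ_i^t − ψ_j^t‖² ≤ 4L₂₂² ∑_i ‖ψ_i^t − ψ_i^{t-1}‖² + 4L₂₁² ∑_i ‖ω_i^t − ω_i^{t-1}‖². -/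
/-!
Subtracting the stationarity identities of clients `i` and `j` eliminates the common anchor:
`μ₂ (ψᵢ - ψⱼ) = cᵢ - cⱼ` with `cᵢ = gᵢ(ωᵢᵗ, ψᵢᵗ) - gᵢ(ωᵢᵗ⁻¹, ψᵢᵗ⁻¹)`. Hence
`μ₂² ∑_{i ≠ j} ‖ψᵢ - ψⱼ‖² ≤ 4N ∑ ‖cᵢ‖²`, and splitting `cᵢ` through `gᵢ(ωᵢᵗ, ψᵢᵗ⁻¹)` bounds
`‖cᵢ‖² ≤ 2 L₂₂² ‖ψᵢᵗ - ψᵢᵗ⁻¹‖² + 2 L₂₁² ‖ωᵢᵗ - ωᵢᵗ⁻¹‖²`.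
-/

open Finset

section SeparatelyLipschitz

variable {α β γ : Type*} [SeminormedAddCommGroup α] [SeminormedAddCommGroup β]
  [SeminormedAddCommGroup γ] {g : α → β → γ} {K₁ K₂ : ℝ}

theorem norm_sub_le_of_lipschitz_left_right
    (h₁ : ∀ x x' y, ‖g x y - g x' y‖ ≤ K₁ * ‖x - x'‖)
    (h₂ : ∀ x y y', ‖g x y - g x y'‖ ≤ K₂ * ‖y - y'‖) (x x' : α) (y y' : β) :
    ‖g x y - g x' y'‖ ≤ K₁ * ‖x - x'‖ + K₂ * ‖y - y'‖ :=
  calc ‖g x y - g x' y'‖ ≤ ‖g x y - g x y'‖ + ‖g x y' - g x' y'‖ :=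
        norm_sub_le_norm_sub_add_norm_sub _ _ _
    _ ≤ K₂ * ‖y - y'‖ + K₁ * ‖x - x'‖ := add_le_add (h₂ x y y') (h₁ x x' y')
    _ = K₁ * ‖x - x'‖ + K₂ * ‖y - y'‖ := add_comm _ _

theorem sq_norm_sub_le_of_lipschitz_left_right
    (h₁ : ∀ x x' y, ‖g x y - g x' y‖ ≤ K₁ * ‖x - x'‖)
    (h₂ : ∀ x y y', ‖g x y - g x y'‖ ≤ K₂ * ‖y - y'‖) (x x' : α) (y y' : β) :
    ‖g x y - g x' y'‖ ^ 2 ≤ 2 * K₁ ^ 2 * ‖x - x'‖ ^ 2 + 2 * K₂ ^ 2 * ‖y - y'‖ ^ 2 :=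
  calc ‖g x y - g x' y'‖ ^ 2 ≤ (K₁ * ‖x - x'‖ + K₂ * ‖y - y'‖) ^ 2 :=
        pow_le_pow_left₀ (norm_nonneg _) (norm_sub_le_of_lipschitz_left_right h₁ h₂ x x' y y') 2
    _ ≤ 2 * ((K₁ * ‖x - x'‖) ^ 2 + (K₂ * ‖y - y'‖) ^ 2) := add_sq_le
    _ = 2 * K₁ ^ 2 * ‖x - x'‖ ^ 2 + 2 * K₂ ^ 2 * ‖y - y'‖ ^ 2 := by ring

end SeparatelyLipschitz

theorem sum_sum_sdiff_singleton_sq_norm_sub_le {ι E : Type*} [Fintype ι] [DecidableEq ι]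
    [SeminormedAddCommGroup E] (f : ι → E) :
    ∑ i, ∑ j ∈ univ \ {i}, ‖f i - f j‖ ^ 2 ≤ 4 * Fintype.card ι * ∑ i, ‖f i‖ ^ 2 := by
  have hdiag : ∀ i, ∑ j ∈ univ \ {i}, ‖f i - f j‖ ^ 2 = ∑ j, ‖f i - f j‖ ^ 2 := fun i => by
    rw [sdiff_singleton_eq_erase, sum_erase _ (by simp)]
  calc ∑ i, ∑ j ∈ univ \ {i}, ‖f i - f j‖ ^ 2
      = ∑ i, ∑ j, ‖f i - f j‖ ^ 2 := sum_congr rfl fun i _ => hdiag i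
    _ ≤ ∑ i, ∑ j, 2 * (‖f i‖ ^ 2 + ‖f j‖ ^ 2) := by
        gcongr with i _ j _
        exact (pow_le_pow_left₀ (norm_nonneg _) (norm_sub_le _ _) 2).trans add_sq_le
    _ = 4 * Fintype.card ι * ∑ i, ‖f i‖ ^ 2 := by
        simp only [mul_add, sum_add_distrib, ← mul_sum, sum_const, card_univ, nsmul_eq_mul,
          sum_comm (γ := ι) (f := fun _ j => ‖f j‖ ^ 2)]
        ring

theorem stmt_9_general {N d₁ d₂ : ℕ} (μ₂ : ℝ)
    (g : Fin N → EuclideanSpace ℝ (Fin d₁) → EuclideanSpace ℝ (Fin d₂) → EuclideanSpace ℝ (Fin d₂))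
    (L21 L22 : ℝ)
    (hL21 : ∀ i ω ω' ψ, ‖g i ω ψ - g i ω' ψ‖ ≤ L21 * ‖ω - ω'‖)
    (hL22 : ∀ i ω ψ ψ', ‖g i ω ψ - g i ω ψ'‖ ≤ L22 * ‖ψ - ψ'‖)
    (ψt ψtm : Fin N → EuclideanSpace ℝ (Fin d₂))
    (ωt ωtm : Fin N → EuclideanSpace ℝ (Fin d₁))
    (ψ₀ : EuclideanSpace ℝ (Fin d₂))
    (hupd : ∀ i, μ₂ • (ψt i - ψ₀) = g i (ωt i) (ψt i) - g i (ωtm i) (ψtm i)) :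
    μ₂ ^ 2 / (2 * N) * ∑ i, ∑ j ∈ Finset.univ \ {i}, ‖ψt i - ψt j‖ ^ 2 ≤
      4 * L22 ^ 2 * ∑ i, ‖ψt i - ψtm i‖ ^ 2
        + 4 * L21 ^ 2 * ∑ i, ‖ωt i - ωtm i‖ ^ 2 := by
  set c : Fin N → EuclideanSpace ℝ (Fin d₂) := fun i => μ₂ • (ψt i - ψ₀)
  have hpair : ∀ i j, μ₂ ^ 2 * ‖ψt i - ψt j‖ ^ 2 = ‖c i - c j‖ ^ 2 := fun i j => by
    rw [← smul_sub, sub_sub_sub_cancel_right, norm_smul, mul_pow, Real.norm_eq_abs, sq_abs]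
  have hc : ∀ i, ‖c i‖ ^ 2 ≤ 2 * L21 ^ 2 * ‖ωt i - ωtm i‖ ^ 2 + 2 * L22 ^ 2 * ‖ψt i - ψtm i‖ ^ 2 :=
    fun i => (congrArg (‖·‖ ^ 2) (hupd i)).trans_le <|
      sq_norm_sub_le_of_lipschitz_left_right (hL21 i) (hL22 i) _ _ _ _
  have hspread : μ₂ ^ 2 * ∑ i, ∑ j ∈ univ \ {i}, ‖ψt i - ψt j‖ ^ 2 ≤ 4 * N * ∑ i, ‖c i‖ ^ 2 := by
    simpa only [mul_sum, hpair, Fintype.card_fin] using sum_sum_sdiff_singleton_sq_norm_sub_le c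
  rcases N.eq_zero_or_pos with rfl | hN
  · simp
  rw [div_mul_eq_mul_div, div_le_iff₀ (by positivity)]
  calc μ₂ ^ 2 * ∑ i, ∑ j ∈ univ \ {i}, ‖ψt i - ψt j‖ ^ 2 ≤ 4 * N * ∑ i, ‖c i‖ ^ 2 := hspread
    _ ≤ 4 * N * ∑ i, (2 * L21 ^ 2 * ‖ωt i - ωtm i‖ ^ 2 + 2 * L22 ^ 2 * ‖ψt i - ψtm i‖ ^ 2) := by
        gcongr with i; exact hc i
    _ = _ := by simp only [sum_add_distrib, ← mul_sum]; ring

/-- Bound on the deviation among clients' maximization variables. -/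
theorem stmt_9 {N d₁ d₂ : ℕ} (μ₂ : ℝ) (hμ₂ : 0 < μ₂)
    (g : Fin N → EuclideanSpace ℝ (Fin d₁) → EuclideanSpace ℝ (Fin d₂) → EuclideanSpace ℝ (Fin d₂))
    (L21 L22 : ℝ)
    (hL21 : ∀ i ω ω' ψ, ‖g i ω ψ - g i ω' ψ‖ ≤ L21 * ‖ω - ω'‖)
    (hL22 : ∀ i ω ψ ψ', ‖g i ω ψ - g i ω ψ'‖ ≤ L22 * ‖ψ - ψ'‖)
    (ψt ψtm : Fin N → EuclideanSpace ℝ (Fin d₂))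
    (ωt ωtm : Fin N → EuclideanSpace ℝ (Fin d₁))
    (ψ₀ : EuclideanSpace ℝ (Fin d₂))
    (hupd : ∀ i, μ₂ • (ψt i - ψ₀) = g i (ωt i) (ψt i) - g i (ωtm i) (ψtm i)) :
    μ₂ ^ 2 / (2 * N) * ∑ i, ∑ j ∈ Finset.univ \ {i}, ‖ψt i - ψt j‖ ^ 2 ≤
      4 * L22 ^ 2 * ∑ i, ‖ψt i - ψtm i‖ ^ 2
        + 4 * L21 ^ 2 * ∑ i, ‖ωt i - ωtm i‖ ^ 2 :=
  stmt_9_general μ₂ g L21 L22 hL21 hL22 ψt ψtm ωt ωtm ψ₀ hupd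
end

section
/- Suppose nonnegative sequences satisfy ε_t ≤ A₅ p_t + A₆ p_{t-1} + A₇ ε_{t-1} + A₈ w_t and p_t ≤ A₉ ε_t + A₁₀ ε_{t-1} + A₄ p_{t-1} + A₁₁ w_t for all t ≥ 1, with all constants nonnegative, B̄₁ > A₅, and B̄₁ A₉ < 1. Then with B₁ = (B̄₁ − A₅)/(1 − B̄₁A₉), B₂ = max{(B̄₁A₁₀ + A₇)/(1 − B̄₁A₉), (B̄₁A₄ + A₆)/(B̄₁ − A₅)}, and B₃ = (B̄₁A₁₁ + A₈)/(1 − B̄₁A₉), one has ε_t + B₁ p_t ≤ B₂(ε_{t-1} + B₁ p_{t-1}) + B₃ w_t. -/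
/-!
Adding `B̄₁` times the second recursion to the first and moving the time-`t` terms to the left
gives `(1 - B̄₁A₉) ε_t + (B̄₁ - A₅) p_t` on the left. Dividing by `1 - B̄₁A₉` yields
`ε_t + B₁ p_t`, and each coefficient on the right is at most `B₂` times the matching coefficient
of `ε_{t-1} + B₁ p_{t-1}`.
-/

lemma coupled_le_weighted_sum {e p e' p' w A₄ A₅ A₆ A₇ A₈ A₉ A₁₀ A₁₁ b : ℝ} (hb : 0 ≤ b)
    (h₁ : e ≤ A₅ * p + A₆ * p' + A₇ * e' + A₈ * w)
    (h₂ : p ≤ A₉ * e + A₁₀ * e' + A₄ * p' + A₁₁ * w) :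
    (1 - b * A₉) * e + (b - A₅) * p ≤
      (b * A₁₀ + A₇) * e' + (b * A₄ + A₆) * p' + (b * A₁₁ + A₈) * w := by
  linear_combination h₁ + b * h₂

lemma add_div_mul_le_max_mul_add {e p e' p' w D E c d f : ℝ} (hD : 0 < D) (hE : 0 < E)
    (he' : 0 ≤ e') (hp' : 0 ≤ p') (h : D * e + E * p ≤ c * e' + d * p' + f * w) :
    e + E / D * p ≤ max (c / D) (d / E) * (e' + E / D * p') + f / D * w := by
  have hdiv : e + E / D * p ≤ c / D * e' + d / E * (E / D * p') + f / D * w := by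
    have hd : d / E * (E / D * p') = d / D * p' := by field_simp
    rw [hd, ← mul_le_mul_iff_of_pos_left hD]
    calc D * (e + E / D * p) = D * e + E * p := by field_simp
      _ ≤ c * e' + d * p' + f * w := h
      _ = D * (c / D * e' + d / D * p' + f / D * w) := by field_simp
  have hc : c / D * e' ≤ max (c / D) (d / E) * e' :=
    mul_le_mul_of_nonneg_right (le_max_left _ _) he'
  have hd : d / E * (E / D * p') ≤ max (c / D) (d / E) * (E / D * p') :=
    mul_le_mul_of_nonneg_right (le_max_right _ _) (by positivity)
  linarith

theorem stmt_14_general (ε p w : ℕ → ℝ)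
    (hε : ∀ t, 0 ≤ ε t) (hp : ∀ t, 0 ≤ p t)
    (A₄ A₅ A₆ A₇ A₈ A₉ A₁₀ A₁₁ Bbar₁ : ℝ)
    (hA₅ : 0 ≤ A₅)
    (hBbar₁ : A₅ < Bbar₁) (hBbar₁A₉ : Bbar₁ * A₉ < 1)
    (hrec1 : ∀ t, 1 ≤ t → ε t ≤ A₅ * p t + A₆ * p (t - 1) + A₇ * ε (t - 1) + A₈ * w t)
    (hrec2 : ∀ t, 1 ≤ t → p t ≤ A₉ * ε t + A₁₀ * ε (t - 1) + A₄ * p (t - 1) + A₁₁ * w t)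
    (B₁ B₂ B₃ : ℝ)
    (hB₁ : B₁ = (Bbar₁ - A₅) / (1 - Bbar₁ * A₉))
    (hB₂ : B₂ = max ((Bbar₁ * A₁₀ + A₇) / (1 - Bbar₁ * A₉)) ((Bbar₁ * A₄ + A₆) / (Bbar₁ - A₅)))
    (hB₃ : B₃ = (Bbar₁ * A₁₁ + A₈) / (1 - Bbar₁ * A₉)) :
    ∀ t, 1 ≤ t → ε t + B₁ * p t ≤ B₂ * (ε (t - 1) + B₁ * p (t - 1)) + B₃ * w t := by
  intro t ht
  subst hB₁ hB₂ hB₃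
  exact add_div_mul_le_max_mul_add (by linarith) (by linarith) (hε _) (hp _)
    (coupled_le_weighted_sum (by linarith) (hrec1 t ht) (hrec2 t ht))

/-- Combining two coupled linear recursions into a single contraction. -/
theorem stmt_14 (ε p w : ℕ → ℝ)
    (hε : ∀ t, 0 ≤ ε t) (hp : ∀ t, 0 ≤ p t) (hw : ∀ t, 0 ≤ w t)
    (A₄ A₅ A₆ A₇ A₈ A₉ A₁₀ A₁₁ Bbar₁ : ℝ)
    (hA₄ : 0 ≤ A₄) (hA₅ : 0 ≤ A₅) (hA₆ : 0 ≤ A₆) (hA₇ : 0 ≤ A₇) (hA₈ : 0 ≤ A₈)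
    (hA₉ : 0 ≤ A₉) (hA₁₀ : 0 ≤ A₁₀) (hA₁₁ : 0 ≤ A₁₁)
    (hBbar₁ : A₅ < Bbar₁) (hBbar₁A₉ : Bbar₁ * A₉ < 1)
    (hrec1 : ∀ t, 1 ≤ t → ε t ≤ A₅ * p t + A₆ * p (t - 1) + A₇ * ε (t - 1) + A₈ * w t)
    (hrec2 : ∀ t, 1 ≤ t → p t ≤ A₉ * ε t + A₁₀ * ε (t - 1) + A₄ * p (t - 1) + A₁₁ * w t)
    (B₁ B₂ B₃ : ℝ)
    (hB₁ : B₁ = (Bbar₁ - A₅) / (1 - Bbar₁ * A₉))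
    (hB₂ : B₂ = max ((Bbar₁ * A₁₀ + A₇) / (1 - Bbar₁ * A₉)) ((Bbar₁ * A₄ + A₆) / (Bbar₁ - A₅)))
    (hB₃ : B₃ = (Bbar₁ * A₁₁ + A₈) / (1 - Bbar₁ * A₉)) :
    ∀ t, 1 ≤ t → ε t + B₁ * p t ≤ B₂ * (ε (t - 1) + B₁ * p (t - 1)) + B₃ * w t :=
  stmt_14_general ε p w hε hp A₄ A₅ A₆ A₇ A₈ A₉ A₁₀ A₁₁ Bbar₁ hA₅ hBbar₁ hBbar₁A₉ hrec1 hrec2 B₁ B₂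
    B₃ hB₁ hB₂ hB₃
end
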